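/- arXiv:2202.10131 — 4 statements merged into one kernel-verified Lean document; each statement's English description precedes it below -/
import Mathlib

section
/- Fix n,m ≥ 1. The composition of the automaton A_n (single state σ, input {0,…,n}, output {0,1}, ψ(σ,x) = 0^x 1 for 0 ≤ x ≤ n−1 and ψ(σ,n) = 0^n) with the automaton B_m (as defined) has states {0,…,m−1} (identifying (σ,q) with q), transition function φ(q,x) = 0 for 0 ≤ x ≤ n−1 and φ(q,n) = q+n mod m, and output function ψ(q,x) = m^{⌊(q+x)/m⌋}(q+x mod m) for 0 ≤ x ≤ n−1 and ψ(q,n) = m^{⌊(q+n)/m⌋}. Moreover, all output values are nonempty words if and only if n ≥ m. -/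
/-- State of an automaton with transition `φ` after reading a finite word from `q`. -/
def runW {Q X : Type*} (φ : Q → X → Q) : Q → List X → Q
  | q, [] => q
  | q, x :: xs => runW φ (φ q x) xs

/-- Output word produced by an asynchronous automaton with transition `φ` and
output `ψ : Q × X → Y*` on reading a finite word from state `q`. -/
def outW {Q X Y : Type*} (φ : Q → X → Q) (ψ : Q → X → List Y) : Q → List X → List Y
  | _, [] => []
  | q, x :: xs => ψ q x ++ outW φ ψ (φ q x) xs

/-- Output function of the one-state automaton `A_n`:
`ψ(σ,x) = 0^x 1` for `0 ≤ x ≤ n-1` and `ψ(σ,n) = 0^n`. -/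
def psiA (n : ℕ) (x : Fin (n + 1)) : List (Fin 2) :=
  if x.val = n then List.replicate n 0 else List.replicate x.val 0 ++ [1]

/-- Transition function of the automaton `B_m`: `φ(q,1) = 0`, `φ(q,0) = q + 1 (mod m)`. -/
def phiB (m : ℕ) (q : ZMod m) (x : Fin 2) : ZMod m :=
  if x = 1 then 0 else q + 1

open Fin.NatCast

/-- Output function of `B_m`: `ψ(q,1) = q`, `ψ(q,0) = ε` for `q ≠ m-1`, `ψ(m-1,0) = m`. -/
def psiB (m : ℕ) (q : ZMod m) (x : Fin 2) : List (Fin (m + 1)) :=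
  if x = 1 then [(q.val : Fin (m + 1))]
  else if q.val = m - 1 then [((m : ℕ) : Fin (m + 1))] else []

/-!
Every output of `A_n` is a block of zeros, possibly followed by a `1`. Reading `0^k` from `q`,
`B_m` moves to `q + k` and emits the letter `m` once for each passage through `m - 1`, i.e.
`⌊(q + k)/m⌋` times; a final `1` then emits the current state `(q + k) mod m` and resets to `0`.
-/

section Automaton

variable {Q X Y : Type*} (φ : Q → X → Q) (ψ : Q → X → List Y)

theorem runW_append (u v : List X) (q : Q) :
    runW φ q (u ++ v) = runW φ (runW φ q u) v := by
  induction u generalizing q with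
  | nil => rfl
  | cons x u ih => exact ih (φ q x)

theorem outW_append (u v : List X) (q : Q) :
    outW φ ψ q (u ++ v) = outW φ ψ q u ++ outW φ ψ (runW φ q u) v := by
  induction u generalizing q with
  | nil => rfl
  | cons x u ih => simp [outW, runW, ih]

end Automaton

section AutomatonB

variable (m : ℕ)

theorem runW_phiB_replicate_zero (k : ℕ) (q : ZMod m) :
    runW (phiB m) q (List.replicate k 0) = q + k := by
  induction k generalizing q with
  | zero => simp [runW]
  | succ k ih =>
    rw [List.replicate_succ, runW, ih]
    simp only [phiB, zero_ne_one, if_false, Nat.cast_succ]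
    ring

theorem runW_phiB_psiA (n : ℕ) (q : ZMod m) (x : Fin (n + 1)) :
    runW (phiB m) q (psiA n x) = if x.val = n then q + n else 0 := by
  by_cases hx : x.val = n
  · simp [psiA, hx, runW_phiB_replicate_zero]
  · simp [psiA, hx, runW_append, runW, phiB]

variable [NeZero m]

theorem outW_phiB_replicate_zero (k : ℕ) (q : ZMod m) :
    outW (phiB m) (psiB m) q (List.replicate k 0) =
      List.replicate ((q.val + k) / m) ((m : ℕ) : Fin (m + 1)) := by
  induction k generalizing q with
  | zero => simp [outW, Nat.div_eq_of_lt q.val_lt]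
  | succ k ih =>
    have hm : 0 < m := Nat.pos_of_neZero m
    have hval : (q + 1).val = (q.val + 1) % m := by
      rw [ZMod.val_add, ZMod.val_one_eq_one_mod, Nat.add_mod_mod]
    rw [List.replicate_succ, outW, ih]
    simp only [phiB, psiB, zero_ne_one, if_false, hval]
    by_cases hq : q.val = m - 1
    · rw [if_pos hq, hq, Nat.sub_add_cancel hm, Nat.mod_self, zero_add,
        show m - 1 + (k + 1) = k + m by omega, Nat.add_div_right _ hm]
      rfl
    · rw [if_neg hq, Nat.mod_eq_of_lt (by have := q.val_lt; omega), List.nil_append]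
      congr 2
      omega

theorem outW_phiB_psiA (n : ℕ) (q : ZMod m) (x : Fin (n + 1)) :
    outW (phiB m) (psiB m) q (psiA n x) =
      if x.val = n then List.replicate ((q.val + n) / m) ((m : ℕ) : Fin (m + 1))
      else List.replicate ((q.val + x.val) / m) ((m : ℕ) : Fin (m + 1))
             ++ [(((q.val + x.val) % m : ℕ) : Fin (m + 1))] := by
  by_cases hx : x.val = n
  · simp [psiA, hx, outW_phiB_replicate_zero]
  · simp [psiA, hx, outW_append, outW_phiB_replicate_zero, runW_phiB_replicate_zero,
      outW, psiB, ZMod.val_add, ZMod.val_natCast]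

/-- Only the input letter `n` can give the empty word, and from state `0` it gives `m^⌊n/m⌋`. -/
theorem outW_phiB_psiA_ne_nil_iff (n : ℕ) :
    (∀ (q : ZMod m) (x : Fin (n + 1)), outW (phiB m) (psiB m) q (psiA n x) ≠ []) ↔ m ≤ n := by
  have hm : 0 < m := Nat.pos_of_neZero m
  constructor
  · intro h
    have h0 := h 0 (Fin.last n)
    rw [outW_phiB_psiA] at h0
    simp only [Fin.val_last, if_true, ZMod.val_zero, zero_add, ne_eq,
      List.replicate_eq_nil_iff, Nat.div_eq_zero_iff, not_or, not_lt] at h0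
    exact h0.2
  · intro hmn q x
    rw [outW_phiB_psiA]
    split_ifs
    · exact List.ne_nil_of_length_pos (by
        rw [List.length_replicate]; exact Nat.div_pos (by omega) hm)
    · simp

end AutomatonB

theorem stmt10_general (n m : ℕ) [NeZero m] :
    (∀ (q : ZMod m) (x : Fin (n + 1)),
        runW (phiB m) q (psiA n x) = if x.val = n then q + n else 0) ∧
    (∀ (q : ZMod m) (x : Fin (n + 1)),
        outW (phiB m) (psiB m) q (psiA n x) =
          if x.val = n then List.replicate ((q.val + n) / m) ((m : ℕ) : Fin (m + 1))
          else List.replicate ((q.val + x.val) / m) ((m : ℕ) : Fin (m + 1))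
                 ++ [(((q.val + x.val) % m : ℕ) : Fin (m + 1))]) ∧
    ((∀ (q : ZMod m) (x : Fin (n + 1)),
        outW (phiB m) (psiB m) q (psiA n x) ≠ []) ↔ m ≤ n) :=
  ⟨runW_phiB_psiA m n, outW_phiB_psiA m n, outW_phiB_psiA_ne_nil_iff m n⟩

/-- The composition `A_n ∘ B_m` (states identified with `{0,…,m-1}`) has transition
`φ(q,x) = 0` for `x ≤ n-1` and `φ(q,n) = q + n (mod m)`, and output
`ψ(q,x) = m^{⌊(q+x)/m⌋}((q+x) mod m)` for `x ≤ n-1`, `ψ(q,n) = m^{⌊(q+n)/m⌋}`.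
Moreover all output values are nonempty words iff `n ≥ m`. -/
theorem stmt10 (n m : ℕ) (hn : 1 ≤ n) [NeZero m] :
    (∀ (q : ZMod m) (x : Fin (n + 1)),
        runW (phiB m) q (psiA n x) = if x.val = n then q + n else 0) ∧
    (∀ (q : ZMod m) (x : Fin (n + 1)),
        outW (phiB m) (psiB m) q (psiA n x) =
          if x.val = n then List.replicate ((q.val + n) / m) ((m : ℕ) : Fin (m + 1))
          else List.replicate ((q.val + x.val) / m) ((m : ℕ) : Fin (m + 1))
                 ++ [(((q.val + x.val) % m : ℕ) : Fin (m + 1))]) ∧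
    ((∀ (q : ZMod m) (x : Fin (n + 1)),
        outW (phiB m) (psiB m) q (psiA n x) ≠ []) ↔ m ≤ n) :=
  stmt10_general n m
end

section
/- For all integers n ≥ m ≥ 1, there exists a bijection f : {0,1,…,n}^ω → {0,1,…,m}^ω that preserves the beginning of words, i.e., a bijective 1-Lipschitz map between the Cantor spaces ({0,…,n}^ω, d_λ) and ({0,…,m}^ω, d_λ). -/
namespace Stmt13

/-- States of the transducer: a pending word `w` plus a flag `t`;
semantics: outputs must start with `w`, and if `t` then the letter right
after `w` must be `≥ 1`. -/
abbrev St := List ℕ × Bool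

/-- The `q+1` pieces into which the semantic set of a bare state
`([], t)` is partitioned. -/
def part0 (q : ℕ) : Bool → ℕ → St
  | true, a =>
    if a + 3 ≤ q then ([a+1], false)
    else if a + 2 = q then ([q-1, 0, 0], false)
    else if a + 1 = q then ([q-1, 0], true)
    else ([q-1], true)
  | false, a =>
    if a + 2 ≤ q then ([a], false)
    else if a + 1 = q then ([q-1, 0], false)
    else ([q-1], true)

def partFn (q : ℕ) (σ : St) (a : ℕ) : St :=
  (σ.1 ++ (part0 q σ.2 a).1, (part0 q σ.2 a).2)

def Sem (σ : St) (v : ℕ → ℕ) : Prop :=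
  (∀ i < σ.1.length, v i = σ.1.getD i 0) ∧ (σ.2 = true → 1 ≤ v σ.1.length)

lemma part0_ne_nil (q : ℕ) (t : Bool) (a : ℕ) : (part0 q t a).1 ≠ [] := by
  cases t <;> simp only [part0] <;> split_ifs <;> simp

lemma part0_lt (q : ℕ) (hq : 2 ≤ q) (t : Bool) (a : ℕ) :
    ∀ c ∈ (part0 q t a).1, c < q := by
  cases t <;> simp only [part0] <;> split_ifs <;> simp <;> omega

lemma part0_head (q : ℕ) (hq : 2 ≤ q) (a : ℕ) :
    1 ≤ (part0 q true a).1.headD 0 := by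
  simp only [part0]; split_ifs <;> simp <;> omega

lemma sem_cons (c : ℕ) (w : List ℕ) (t : Bool) (v : ℕ → ℕ) :
    Sem (c :: w, t) v ↔ v 0 = c ∧ Sem (w, t) (fun i => v (i+1)) := by
  constructor
  · rintro ⟨h1, h2⟩
    refine ⟨h1 0 (by simp), ⟨fun i hi => ?_, fun ht => h2 ht⟩⟩
    simpa using h1 (i+1) (by simpa using hi)
  · rintro ⟨h0, h1, h2⟩
    refine ⟨fun i hi => ?_, fun ht => h2 ht⟩
    cases i with
    | zero => simpa using h0
    | succ j => simpa using h1 j (by simpa using hi)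


lemma sem_nil (t : Bool) (v : ℕ → ℕ) : Sem ([], t) v ↔ (t = true → 1 ≤ v 0) := by
  simp [Sem]

lemma sem1 (c : ℕ) (t : Bool) (v : ℕ → ℕ) :
    Sem ([c], t) v ↔ v 0 = c ∧ (t = true → 1 ≤ v 1) := by
  simp [sem_cons, sem_nil]

lemma sem2 (c d : ℕ) (t : Bool) (v : ℕ → ℕ) :
    Sem ([c, d], t) v ↔ v 0 = c ∧ v 1 = d ∧ (t = true → 1 ≤ v 2) := by
  simp [sem_cons, sem_nil]

lemma sem3 (c d e : ℕ) (t : Bool) (v : ℕ → ℕ) :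
    Sem ([c, d, e], t) v ↔ v 0 = c ∧ v 1 = d ∧ v 2 = e ∧ (t = true → 1 ≤ v 3) := by
  simp [sem_cons, sem_nil]

/-- classifier for the `false`-state pieces -/
lemma classify_false (q b : ℕ) (hq : 2 ≤ q) (hb : b ≤ q) (v : ℕ → ℕ) (hv0 : v 0 < q)
    (h : Sem (part0 q false b) v) :
    b = (if v 0 + 2 ≤ q then v 0 else if v 1 = 0 then q - 1 else q) := by
  simp only [part0] at h
  split_ifs at h with h1 h2
  · simp [sem1] at h
    split_ifs <;> omega
  · simp [sem2] at h
    split_ifs <;> omega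
  · simp [sem1] at h
    split_ifs <;> omega

/-- classifier for the `true`-state pieces -/
lemma classify_true (q b : ℕ) (hq : 2 ≤ q) (hb : b ≤ q) (v : ℕ → ℕ) (hv0 : v 0 < q)
    (h : Sem (part0 q true b) v) :
    b = (if v 0 + 2 ≤ q then v 0 - 1 else
          if v 1 = 0 then (if v 2 = 0 then q - 2 else q - 1) else q) := by
  simp only [part0] at h
  split_ifs at h with h1 h2 h3
  · simp [sem1] at h
    split_ifs <;> omega
  · simp [sem3] at h
    split_ifs <;> omega
  · simp [sem2] at h
    split_ifs <;> omega
  · simp [sem1] at h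
    split_ifs <;> omega

lemma exists_false (q : ℕ) (hq : 2 ≤ q) (v : ℕ → ℕ) (hv0 : v 0 < q) :
    Sem (part0 q false (if v 0 + 2 ≤ q then v 0 else if v 1 = 0 then q - 1 else q)) v := by
  by_cases h0 : v 0 + 2 ≤ q
  · rw [if_pos h0]
    simp only [part0]
    rw [if_pos h0]
    simp [sem1]
  · rw [if_neg h0]
    by_cases h1 : v 1 = 0
    · rw [if_pos h1]
      simp only [part0]
      rw [if_neg (by omega), if_pos (by omega)]
      simp [sem2]
      omega
    · rw [if_neg h1]
      simp only [part0]
      rw [if_neg (by omega), if_neg (by omega)]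
      simp [sem1]
      omega

lemma exists_true (q : ℕ) (hq : 2 ≤ q) (v : ℕ → ℕ) (hv0 : v 0 < q) (hp : 1 ≤ v 0) :
    Sem (part0 q true (if v 0 + 2 ≤ q then v 0 - 1 else
          if v 1 = 0 then (if v 2 = 0 then q - 2 else q - 1) else q)) v := by
  by_cases h0 : v 0 + 2 ≤ q
  · rw [if_pos h0]
    simp only [part0]
    rw [if_pos (by omega)]
    simp [sem1]
    omega
  · rw [if_neg h0]
    by_cases h1 : v 1 = 0
    · rw [if_pos h1]
      by_cases h2 : v 2 = 0
      · rw [if_pos h2]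
        simp only [part0]
        rw [if_neg (by omega), if_pos (by omega)]
        simp [sem3]
        omega
      · rw [if_neg h2]
        simp only [part0]
        rw [if_neg (by omega), if_neg (by omega), if_pos (by omega)]
        simp [sem2]
        omega
    · rw [if_neg h1]
      simp only [part0]
      rw [if_neg (by omega), if_neg (by omega), if_neg (by omega)]
      simp [sem1]
      omega

lemma cover0 (q : ℕ) (hq : 2 ≤ q) (t : Bool) (v : ℕ → ℕ) (hv : ∀ i, v i < q)
    (hsem : Sem ([], t) v) : ∃! a : Fin (q+1), Sem (part0 q t ↑a) v := by
  have hv0 := hv 0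
  cases t with
  | false =>
    refine ⟨⟨if v 0 + 2 ≤ q then v 0 else if v 1 = 0 then q - 1 else q, by split_ifs <;> omega⟩,
      exists_false q hq v hv0, ?_⟩
    intro b hb
    have := classify_false q ↑b hq (by omega) v hv0 hb
    exact Fin.ext this
  | true =>
    have hp : 1 ≤ v 0 := by rw [sem_nil] at hsem; exact hsem rfl
    refine ⟨⟨if v 0 + 2 ≤ q then v 0 - 1 else
          if v 1 = 0 then (if v 2 = 0 then q - 2 else q - 1) else q, by split_ifs <;> omega⟩,
      exists_true q hq v hv0 hp, ?_⟩
    intro b hb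
    have := classify_true q ↑b hq (by omega) v hv0 hb
    exact Fin.ext this


/-! ### The transducer -/

def nextSt (q : ℕ) (σ : St) (a : ℕ) : St :=
  ((σ.1 ++ (part0 q σ.2 a).1).tail, (part0 q σ.2 a).2)

def outLetter (q : ℕ) (σ : St) (a : ℕ) : ℕ :=
  (σ.1 ++ (part0 q σ.2 a).1).headD 0

def sts (q : ℕ) (σ : St) (u : ℕ → ℕ) : ℕ → St
  | 0 => σ
  | i+1 => nextSt q (sts q σ u i) (u i)

def out (q : ℕ) (σ : St) (u : ℕ → ℕ) (i : ℕ) : ℕ :=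
  outLetter q (sts q σ u i) (u i)

lemma partFn_ne_nil (q : ℕ) (σ : St) (a : ℕ) : (partFn q σ a).1 ≠ [] := by
  simp [partFn, part0_ne_nil]

lemma nextSt_eq (q : ℕ) (σ : St) (a : ℕ) :
    nextSt q σ a = ((partFn q σ a).1.tail, (partFn q σ a).2) := rfl

lemma outLetter_eq (q : ℕ) (σ : St) (a : ℕ) :
    outLetter q σ a = (partFn q σ a).1.headD 0 := rfl

lemma sts_shift (q : ℕ) (σ : St) (u : ℕ → ℕ) :
    ∀ i, sts q σ u (i+1) = sts q (nextSt q σ (u 0)) (fun j => u (j+1)) i := by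
  intro i
  induction i with
  | zero => rfl
  | succ i ih => show nextSt q (sts q σ u (i+1)) (u (i+1)) = _; rw [ih]; rfl

lemma out_shift (q : ℕ) (σ : St) (u : ℕ → ℕ) (i : ℕ) :
    out q σ u (i+1) = out q (nextSt q σ (u 0)) (fun j => u (j+1)) i := by
  unfold out
  rw [sts_shift]

def WFSt (q : ℕ) (σ : St) : Prop := ∀ c ∈ σ.1, c < q

lemma wf_next (q : ℕ) (hq : 2 ≤ q) (σ : St) (a : ℕ) (h : WFSt q σ) :
    WFSt q (nextSt q σ a) := by
  intro c hc
  have hc' : c ∈ σ.1 ++ (part0 q σ.2 a).1 := List.mem_of_mem_tail hc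
  rcases List.mem_append.1 hc' with h1 | h1
  · exact h c h1
  · exact part0_lt q hq σ.2 a c h1

lemma wf_sts (q : ℕ) (hq : 2 ≤ q) (σ : St) (u : ℕ → ℕ) (h : WFSt q σ) (i : ℕ) :
    WFSt q (sts q σ u i) := by
  induction i with
  | zero => exact h
  | succ i ih => exact wf_next q hq _ _ ih

lemma headD_mem {l : List ℕ} (h : l ≠ []) : l.headD 0 ∈ l := by
  cases l with
  | nil => exact absurd rfl h
  | cons c r => simp

lemma out_lt (q : ℕ) (hq : 2 ≤ q) (σ : St) (u : ℕ → ℕ) (h : WFSt q σ) (i : ℕ) :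
    out q σ u i < q := by
  have hw := wf_sts q hq σ u h i
  set τ := sts q σ u i with hτ
  show outLetter q τ (u i) < q
  have hne : τ.1 ++ (part0 q τ.2 (u i)).1 ≠ [] := by
    simp [part0_ne_nil]
  have := headD_mem hne
  rcases List.mem_append.1 this with h1 | h1
  · exact hw _ h1
  · exact part0_lt q hq τ.2 (u i) _ h1

/-- Key membership lemma: the output stream satisfies the state's constraints. -/
lemma out_mem (q : ℕ) (hq : 2 ≤ q) :
    ∀ (i : ℕ) (w : List ℕ) (t : Bool) (u : ℕ → ℕ),
      (i < w.length → out q (w, t) u i = w.getD i 0) ∧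
      (t = true → i = w.length → 1 ≤ out q (w, t) u i) := by
  intro i
  induction i with
  | zero =>
    intro w t u
    cases w with
    | nil =>
      refine ⟨by simp, fun ht _ => ?_⟩
      show 1 ≤ ([] ++ (part0 q t (u 0)).1).headD 0
      rw [List.nil_append]
      subst ht
      exact part0_head q hq (u 0)
    | cons c w' =>
      refine ⟨fun _ => ?_, fun _ h => by simp at h⟩
      show ((c :: w') ++ (part0 q t (u 0)).1).headD 0 = _
      simp
  | succ i ih =>
    intro w t u
    cases w with
    | nil => exact ⟨by simp, fun _ h => by simp at h⟩
    | cons c w' =>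
      have hsh : out q (c :: w', t) u (i+1)
          = out q (w' ++ (part0 q t (u 0)).1, (part0 q t (u 0)).2) (fun j => u (j+1)) i := by
        rw [out_shift]; rfl
      constructor
      · intro hi
        have hi' : i < w'.length := by simpa using hi
        have := (ih (w' ++ (part0 q t (u 0)).1) (part0 q t (u 0)).2 (fun j => u (j+1))).1
          (by simp; omega)
        rw [hsh, this]
        rw [List.getD_append _ _ _ _ (by omega)]
        simp [List.getD_cons_succ, hi']
      · intro ht hi
        have hi' : i = w'.length := by simpa using hi
        have hzne := part0_ne_nil q t (u 0)
        have hzlen : 1 ≤ (part0 q t (u 0)).1.length := by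
          cases h : (part0 q t (u 0)).1 with
          | nil => exact absurd h hzne
          | cons _ _ => simp
        have := (ih (w' ++ (part0 q t (u 0)).1) (part0 q t (u 0)).2 (fun j => u (j+1))).1
          (by simp; omega)
        rw [hsh, this]
        subst hi'
        rw [List.getD_append_right _ _ _ _ (le_refl _)]
        simp only [Nat.sub_self]
        have : (part0 q t (u 0)).1.getD 0 0 = (part0 q t (u 0)).1.headD 0 := by
          cases h : (part0 q t (u 0)).1 with
          | nil => exact absurd h hzne
          | cons _ _ => simp
        rw [this]
        subst ht
        exact part0_head q hq (u 0)

lemma sem_out (q : ℕ) (hq : 2 ≤ q) (σ : St) (u : ℕ → ℕ) :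
    Sem σ (fun i => out q σ u i) := by
  obtain ⟨w, t⟩ := σ
  exact ⟨fun i hi => (out_mem q hq i w t u).1 hi,
    fun ht => (out_mem q hq w.length w t u).2 ht rfl⟩


lemma partFn_cons (q : ℕ) (c : ℕ) (w : List ℕ) (t : Bool) (a : ℕ) :
    partFn q (c :: w, t) a = (c :: (partFn q (w, t) a).1, (partFn q (w, t) a).2) := rfl

/-- The pieces `partFn q σ a`, `a < q+1`, partition the semantic set of `σ`. -/
lemma cover (q : ℕ) (hq : 2 ≤ q) :
    ∀ (w : List ℕ) (t : Bool) (v : ℕ → ℕ), (∀ i, v i < q) → Sem (w, t) v →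
      ∃! a : Fin (q+1), Sem (partFn q (w, t) ↑a) v := by
  intro w
  induction w with
  | nil =>
    intro t v hv hs
    have h0 := cover0 q hq t v hv hs
    have he : ∀ a : ℕ, partFn q (([] : List ℕ), t) a = part0 q t a := by
      intro a; simp [partFn]
    simpa [he] using h0
  | cons c w' ih =>
    intro t v hv hs
    rw [sem_cons] at hs
    have ih' := ih t (fun i => v (i+1)) (fun i => hv (i+1)) hs.2
    obtain ⟨a, ha, hau⟩ := ih'
    refine ⟨a, ?_, ?_⟩
    · show Sem (partFn q (c :: w', t) ↑a) v
      rw [partFn_cons, sem_cons]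
      exact ⟨hs.1, ha⟩
    · intro b hb
      have hb' : Sem (partFn q (c :: w', t) ↑b) v := hb
      rw [partFn_cons, sem_cons] at hb'
      exact hau b hb'.2

/-- The output stream lies in the piece selected by the first input letter. -/
lemma sem_out_part (q : ℕ) (hq : 2 ≤ q) (σ : St) (u : ℕ → ℕ) :
    Sem (partFn q σ (u 0)) (fun i => out q σ u i) := by
  obtain ⟨b, r, e⟩ := List.exists_cons_of_ne_nil (partFn_ne_nil q σ (u 0))
  have e2 : partFn q σ (u 0) = (b :: r, (partFn q σ (u 0)).2) := by
    rw [← e]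
  rw [e2, sem_cons]
  constructor
  · show outLetter q σ (u 0) = b
    rw [outLetter_eq, e]
    simp
  · have hnext : nextSt q σ (u 0) = (r, (partFn q σ (u 0)).2) := by
      rw [nextSt_eq, e]
      simp
    have : (fun i => out q σ u (i+1)) = fun i => out q (r, (partFn q σ (u 0)).2)
        (fun j => u (j+1)) i := by
      funext i
      rw [out_shift, hnext]
    rw [this]
    exact sem_out q hq _ _

lemma head_eq (q : ℕ) (hq : 2 ≤ q) (σ : St) (hwf : WFSt q σ) (u v : ℕ → ℕ)
    (hu : ∀ j, u j < q + 1) (hv : ∀ j, v j < q + 1)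
    (h : ∀ j, out q σ u j = out q σ v j) : u 0 = v 0 := by
  have hx : ∀ i, out q σ u i < q := out_lt q hq σ u hwf
  have hsem : Sem σ (fun i => out q σ u i) := sem_out q hq σ u
  obtain ⟨w, t⟩ := σ
  obtain ⟨a, _, hau⟩ := cover q hq w t (fun i => out q (w, t) u i) hx hsem
  have h1 : Sem (partFn q (w, t) (u 0)) (fun i => out q (w, t) u i) :=
    sem_out_part q hq (w, t) u
  have h2 : Sem (partFn q (w, t) (v 0)) (fun i => out q (w, t) u i) := by
    have := sem_out_part q hq (w, t) v
    have he : (fun i => out q (w, t) v i) = fun i => out q (w, t) u i := by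
      funext i; exact (h i).symm
    rwa [he] at this
  have e1 := hau ⟨u 0, hu 0⟩ h1
  have e2 := hau ⟨v 0, hv 0⟩ h2
  have := e1.trans e2.symm
  simpa using congrArg Fin.val this

lemma out_inj (q : ℕ) (hq : 2 ≤ q) :
    ∀ (i : ℕ) (σ : St), WFSt q σ → ∀ (u v : ℕ → ℕ), (∀ j, u j < q + 1) →
      (∀ j, v j < q + 1) → (∀ j, out q σ u j = out q σ v j) → u i = v i := by
  intro i
  induction i with
  | zero => exact fun σ hwf u v hu hv h => head_eq q hq σ hwf u v hu hv h
  | succ i ih =>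
    intro σ hwf u v hu hv h
    have h0 : u 0 = v 0 := head_eq q hq σ hwf u v hu hv h
    have := ih (nextSt q σ (u 0)) (wf_next q hq σ (u 0) hwf)
      (fun j => u (j+1)) (fun j => v (j+1)) (fun j => hu (j+1)) (fun j => hv (j+1))
      (fun j => by
        rw [← out_shift q σ u j, h0, ← out_shift q σ v j]
        exact h (j+1))
    exact this

lemma out_prefix (q : ℕ) (σ : St) (u v : ℕ → ℕ) :
    ∀ (k : ℕ), (∀ i < k, u i = v i) → ∀ i < k, out q σ u i = out q σ v i := by
  have hsts : ∀ (k : ℕ), (∀ i < k, u i = v i) → sts q σ u k = sts q σ v k := by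
    intro k
    induction k with
    | zero => intro _; rfl
    | succ k ih =>
      intro h
      show nextSt q (sts q σ u k) (u k) = nextSt q (sts q σ v k) (v k)
      rw [ih (fun i hi => h i (by omega)), h k (by omega)]
  intro k h i hi
  unfold out
  rw [hsts i (fun j hj => h j (by omega)), h i hi]


/-! ### Surjectivity -/

def Good (q : ℕ) (p : St × (ℕ → ℕ)) : Prop := Sem p.1 p.2 ∧ ∀ i, p.2 i < q

noncomputable def nxt (q : ℕ) (hq : 2 ≤ q) (p : St × (ℕ → ℕ)) (hp : Good q p) :
    Fin (q+1) :=
  (cover q hq p.1.1 p.1.2 p.2 hp.2 hp.1).exists.choose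

lemma nxt_spec (q : ℕ) (hq : 2 ≤ q) (p : St × (ℕ → ℕ)) (hp : Good q p) :
    Sem (partFn q p.1 ↑(nxt q hq p hp)) p.2 :=
  (cover q hq p.1.1 p.1.2 p.2 hp.2 hp.1).exists.choose_spec

noncomputable def stepPair (q : ℕ) (hq : 2 ≤ q) (p : St × (ℕ → ℕ)) (hp : Good q p) :
    St × (ℕ → ℕ) :=
  (nextSt q p.1 ↑(nxt q hq p hp), fun i => p.2 (i+1))

lemma good_step (q : ℕ) (hq : 2 ≤ q) (p : St × (ℕ → ℕ)) (hp : Good q p) :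
    Good q (stepPair q hq p hp) := by
  set a : ℕ := ↑(nxt q hq p hp) with ha
  obtain ⟨b, r, e⟩ := List.exists_cons_of_ne_nil (partFn_ne_nil q p.1 a)
  have hs := nxt_spec q hq p hp
  rw [← ha] at hs
  have e2 : partFn q p.1 a = (b :: r, (partFn q p.1 a).2) := by rw [← e]
  rw [e2, sem_cons] at hs
  constructor
  · show Sem (nextSt q p.1 a) _
    have : nextSt q p.1 a = (r, (partFn q p.1 a).2) := by
      rw [nextSt_eq, e]
      simp
    rw [this]
    exact hs.2
  · exact fun i => hp.2 (i+1)

lemma nxt_out (q : ℕ) (hq : 2 ≤ q) (p : St × (ℕ → ℕ)) (hp : Good q p) :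
    p.2 0 = outLetter q p.1 ↑(nxt q hq p hp) := by
  set a : ℕ := ↑(nxt q hq p hp) with ha
  obtain ⟨b, r, e⟩ := List.exists_cons_of_ne_nil (partFn_ne_nil q p.1 a)
  have hs := nxt_spec q hq p hp
  rw [← ha] at hs
  have e2 : partFn q p.1 a = (b :: r, (partFn q p.1 a).2) := by rw [← e]
  rw [e2, sem_cons] at hs
  rw [outLetter_eq, e]
  simpa using hs.1

noncomputable def invSeq (q : ℕ) (hq : 2 ≤ q) (v : ℕ → ℕ) (hv : Good q (([], false), v)) :
    ℕ → {p : St × (ℕ → ℕ) // Good q p}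
  | 0 => ⟨(([], false), v), hv⟩
  | k+1 => ⟨stepPair q hq (invSeq q hq v hv k).1 (invSeq q hq v hv k).2,
      good_step q hq _ _⟩

noncomputable def uS (q : ℕ) (hq : 2 ≤ q) (v : ℕ → ℕ) (hv : Good q (([], false), v))
    (k : ℕ) : ℕ :=
  ↑(nxt q hq (invSeq q hq v hv k).1 (invSeq q hq v hv k).2)

lemma uS_lt (q : ℕ) (hq : 2 ≤ q) (v : ℕ → ℕ) (hv : Good q (([], false), v)) (k : ℕ) :
    uS q hq v hv k < q + 1 := (nxt q hq _ _).isLt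

lemma invSeq_sts (q : ℕ) (hq : 2 ≤ q) (v : ℕ → ℕ) (hv : Good q (([], false), v)) :
    ∀ k, sts q ([], false) (uS q hq v hv) k = (invSeq q hq v hv k).1.1 ∧
      ∀ j, (invSeq q hq v hv k).1.2 j = v (k + j) := by
  intro k
  induction k with
  | zero => exact ⟨rfl, fun j => by show v j = v (0 + j); rw [Nat.zero_add]⟩
  | succ k ih =>
    constructor
    · show nextSt q (sts q ([], false) (uS q hq v hv) k) (uS q hq v hv k) = _
      rw [ih.1]
      rfl
    · intro j
      show (invSeq q hq v hv k).1.2 (j+1) = _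
      rw [ih.2 (j+1)]
      congr 1
      omega

lemma out_uS (q : ℕ) (hq : 2 ≤ q) (v : ℕ → ℕ) (hv : Good q (([], false), v)) (k : ℕ) :
    out q ([], false) (uS q hq v hv) k = v k := by
  have h := invSeq_sts q hq v hv k
  unfold out
  rw [h.1]
  show outLetter q (invSeq q hq v hv k).1.1
      ↑(nxt q hq (invSeq q hq v hv k).1 (invSeq q hq v hv k).2) = v k
  rw [← nxt_out q hq _ _, h.2 0]
  norm_num


/-! ### The one-step reduction, at the level of `Fin` sequences -/

lemma onestep (q : ℕ) (hq : 2 ≤ q) :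
    ∃ F : (ℕ → Fin (q + 1)) → ℕ → Fin q,
      Function.Bijective F ∧
      ∀ (u v : ℕ → Fin (q + 1)) (k : ℕ),
        (∀ i < k, u i = v i) → ∀ i < k, F u i = F v i := by
  have hwf : WFSt q (([], false) : St) := by intro c hc; simp at hc
  refine ⟨fun u i => ⟨out q ([], false) (fun j => ↑(u j)) i,
    out_lt q hq _ _ hwf i⟩, ⟨?_, ?_⟩, ?_⟩
  · intro u v h
    have h' : ∀ j, out q ([], false) (fun j => ↑(u j)) j
        = out q ([], false) (fun j => ↑(v j)) j := fun j =>
      congrArg Fin.val (congrFun h j)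
    funext i
    exact Fin.ext (out_inj q hq i ([], false) hwf _ _
      (fun j => (u j).isLt) (fun j => (v j).isLt) h')
  · intro w
    have hsem : Sem (([], false) : St) (fun i => ↑(w i)) := by
      constructor
      · intro i hi
        simp at hi
      · intro h
        simp at h
    have hv : Good q ((([], false) : St), fun i => ↑(w i)) :=
      ⟨hsem, fun i => (w i).isLt⟩
    refine ⟨fun i => ⟨uS q hq _ hv i, uS_lt q hq _ hv i⟩, ?_⟩
    funext i
    exact Fin.ext (out_uS q hq _ hv i)
  · intro u v k h i hi
    exact Fin.ext (out_prefix q ([], false) _ _ k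
      (fun j hj => congrArg Fin.val (h j hj)) i hi)

end Stmt13

/-- For all integers `n ≥ m ≥ 1`, there exists a bijection
`f : {0,…,n}^ω → {0,…,m}^ω` preserving the beginning of words, i.e. a bijective
1-Lipschitz (short) map between the corresponding Cantor spaces. -/
theorem stmt13 (n m : ℕ) (hm : 1 ≤ m) (hmn : m ≤ n) :
    ∃ f : (ℕ → Fin (n + 1)) → ℕ → Fin (m + 1),
      Function.Bijective f ∧
      ∀ (u v : ℕ → Fin (n + 1)) (k : ℕ),
        (∀ i < k, u i = v i) → ∀ i < k, f u i = f v i := by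
  induction n, hmn using Nat.le_induction with
  | base =>
    exact ⟨id, Function.bijective_id, fun u v k h i hi => h i hi⟩
  | succ n hn ih =>
    obtain ⟨f, hf, hfp⟩ := ih
    obtain ⟨F, hF, hFp⟩ := Stmt13.onestep (n + 1) (by omega)
    refine ⟨fun u => f (F u), hf.comp hF, ?_⟩
    intro u v k h i hi
    exact hfp (F u) (F v) k (fun j hj => hFp u v k h j hj) i hi
end

section
/- Equivalently stated via colourings: for integers n ≥ m ≥ 1, with X = {0,…,n} and Y = {0,…,m}, there exists a colouring c : X⁺ → Y of the (n+1)-ary Cantor tree such that the induced map c̃ : X^ω → Y^ω, c̃(x₁x₂x₃…) = c(x₁)c(x₁x₂)c(x₁x₂x₃)…, is a bijection. Combined with the non-surjectivity when n < m, a bijective colouring exists if and only if n ≥ m. -/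
/-!
When `2 ≤ b ≤ a`, label the nodes of the `a`-ary input tree by *blocks*: a block of depth `t` is
an interval `[lo, hi]` of output words of length `t`, read as base-`b` numbers, whose words share
their first `t - 1` letters, so it has `N ≤ b` elements. The root gets all words of length `1`.
For a block of size `N` take the least `r ≥ 1` with `a ≤ N * b ^ r`; its `N * b ^ r` extensions
of length `t + r` are cut into `a` consecutive nonempty pieces, each inside one run of `b`
siblings, which is possible because `N * b ^ (r - 1) ≤ a`: these are the blocks of the `a`
children. A node at depth `k + 1` has a block of depth at least `k + 2` and is coloured by the
`k`-th letter shared by the words of its block.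

Along an input sequence the blocks are nested with depth tending to infinity, so they shrink to
the output sequence the colouring produces; two input sequences end up in disjoint sibling blocks
at their first difference, and every output sequence lies in one chain of blocks. Conversely,
surjectivity already forces the colours of the one-letter words to exhaust the output alphabet.
-/

/-- The induced map `c̃ : X^ω → Y^ω` of a colouring `c` of nonempty finite words:
the `k`-th letter of `c̃ u` is `c` applied to the prefix of `u` of length `k+1`. -/
def ctil {X Y : Type*} (c : List X → Y) (u : ℕ → X) : ℕ → Y :=
  fun k => c (List.ofFn fun i : Fin (k + 1) => u i)

theorem card_le_of_surjective_ctil {X Y : Type*} [Fintype X] [Fintype Y] {c : List X → Y}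
    (hc : Function.Surjective (ctil c)) : Fintype.card Y ≤ Fintype.card X := by
  refine Fintype.card_le_of_surjective (fun x => c [x]) fun y => ?_
  obtain ⟨u, hu⟩ := hc fun _ => y
  exact ⟨u 0, by simpa [ctil] using congrFun hu 0⟩

theorem foldl_ofFn_succ {α β : Type*} (f : α → β → α) (s : α) (u : ℕ → β) (k : ℕ) :
    (List.ofFn fun i : Fin (k + 1) => u i).foldl f s =
      f ((List.ofFn fun i : Fin k => u i).foldl f s) (u k) := by
  rw [List.ofFn_succ', List.concat_eq_append, List.foldl_concat]
  rfl

theorem exists_forall_foldl_ofFn {α β : Type*} (f : α → β → α) {P : α → Prop} {s : α}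
    (hs : P s) (h : ∀ t, P t → ∃ x, P (f t x)) :
    ∃ u : ℕ → β, ∀ k, P ((List.ofFn fun i : Fin k => u i).foldl f s) := by
  choose g hg using h
  let path : ℕ → {t // P t} := fun k =>
    Nat.rec ⟨s, hs⟩ (fun _ t => ⟨f t (g t t.2), hg t t.2⟩) k
  let u : ℕ → β := fun k => g (path k).1 (path k).2
  refine ⟨u, fun k => ?_⟩
  suffices (List.ofFn fun i : Fin k => u i).foldl f s = (path k).1 by
    rw [this]; exact (path k).2
  induction k with
  | zero => rfl
  | succ k ih => rw [foldl_ofFn_succ, ih]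

theorem exists_le_and_lt_succ {α : Type*} [LinearOrder α] {f : ℕ → α} {p : α} {n : ℕ}
    (h₀ : f 0 ≤ p) (hn : p < f n) : ∃ x < n, f x ≤ p ∧ p < f (x + 1) := by
  induction n with
  | zero => exact absurd h₀ (not_le.2 hn)
  | succ n ih =>
    by_cases h : p < f n
    · obtain ⟨x, hx, hfx⟩ := ih h
      exact ⟨x, by omega, hfx⟩
    · exact ⟨n, n.lt_succ_self, not_lt.1 h, hn⟩

namespace CantorColouring

def prefixVal (b : ℕ) (y : ℕ → Fin b) : ℕ → ℕ
  | 0 => 0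
  | t + 1 => prefixVal b y t * b + y t

def digitSeq (b : ℕ) [NeZero b] (T v : ℕ) : ℕ → Fin b :=
  fun i => Fin.ofNat b (v / b ^ (T - 1 - i))

section Digits

variable {b : ℕ}

theorem prefixVal_add_div_pow (y : ℕ → Fin b) (t d : ℕ) :
    prefixVal b y (t + d) / b ^ d = prefixVal b y t := by
  induction d with
  | zero => simp
  | succ d ih =>
    rw [← add_assoc, prefixVal, pow_succ', ← Nat.div_div_eq_div_mul, mul_comm,
      Nat.mul_add_div (y 0).pos, Nat.div_eq_of_lt (y _).isLt, add_zero, ih]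

theorem prefixVal_congr {y y' : ℕ → Fin b} {t : ℕ} (h : ∀ i < t, y i = y' i) :
    prefixVal b y t = prefixVal b y' t := by
  induction t with
  | zero => rfl
  | succ t ih =>
    rw [prefixVal, prefixVal, ih fun i hi => h i (by omega), h t t.lt_succ_self]

variable [NeZero b]

theorem digitSeq_prefixVal (y : ℕ → Fin b) {T i : ℕ} (hi : i < T) :
    digitSeq b T (prefixVal b y T) i = y i := by
  obtain ⟨d, rfl⟩ : ∃ d, T = i + 1 + d := ⟨T - 1 - i, by omega⟩
  rw [digitSeq, show i + 1 + d - 1 - i = d by omega, prefixVal_add_div_pow]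
  ext
  simp [prefixVal, Nat.mod_eq_of_lt (y i).isLt]

theorem prefixVal_digitSeq {T v s : ℕ} (hv : v < b ^ T) (hs : s ≤ T) :
    prefixVal b (digitSeq b T v) s = v / b ^ (T - s) := by
  induction s with
  | zero => exact (Nat.div_eq_of_lt hv).symm
  | succ s ih =>
    have hTs : T - s = T - 1 - s + 1 := by omega
    rw [prefixVal, ih (by omega), digitSeq, Fin.val_ofNat, hTs, pow_succ,
      ← Nat.div_div_eq_div_mul, Nat.div_add_mod', Nat.sub_sub, add_comm 1 s]

end Digits

/- For `G ≤ a ≤ G * b`, the points `cut a b G x`, `x ≤ a`, split `[0, G * b)` into `a`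
nonempty intervals, each inside some `[j * b, (j + 1) * b)`: first whole runs of length `b`,
then single points. -/
def cut (a b G x : ℕ) : ℕ := min (b * x) (G * b - a + x)

section Cut

variable {a b G : ℕ}

@[simp]
theorem cut_zero : cut a b G 0 = 0 := by simp [cut]

theorem cut_strictMono (hb : 0 < b) : StrictMono (cut a b G) := by
  intro x y h
  apply lt_min
  · exact (min_le_left _ _).trans_lt (Nat.mul_lt_mul_of_pos_left h hb)
  · exact (min_le_right _ _).trans_lt (by omega)

theorem cut_self (hGa : G ≤ a) (haG : a ≤ G * b) : cut a b G a = G * b := by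
  rw [cut, Nat.sub_add_cancel haG]
  exact min_eq_right (by rw [mul_comm b]; exact Nat.mul_le_mul_right b hGa)

theorem cut_div_eq (hb : 0 < b) (x : ℕ) : cut a b G x / b = (cut a b G (x + 1) - 1) / b := by
  have hlt := cut_strictMono (a := a) (G := G) hb (show x < x + 1 by omega)
  rcases le_or_gt (b * x) (G * b - a + x) with h | h
  · have hx : cut a b G x = b * x := min_eq_left h
    have hx1 : cut a b G (x + 1) ≤ b * x + b := (min_le_left _ _).trans_eq (mul_add_one b x)
    rw [hx] at hlt
    rw [hx, Nat.mul_div_cancel_left x hb]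
    refine (Nat.div_eq_of_lt_le ?_ ?_).symm
    · rw [mul_comm]; omega
    · rw [add_one_mul, mul_comm]; omega
  · have hx : cut a b G x = G * b - a + x := min_eq_right h.le
    have hx1 : cut a b G (x + 1) = G * b - a + (x + 1) :=
      min_eq_right (by rw [mul_add]; omega)
    rw [hx, hx1]
    rfl

end Cut

structure Block where
  depth : ℕ
  lo : ℕ
  hi : ℕ

namespace Block

structure Valid (b : ℕ) (σ : Block) : Prop where
  lo_le_hi : σ.lo ≤ σ.hi
  hi_lt : σ.hi < b ^ σ.depth
  lo_div_eq : σ.lo / b = σ.hi / b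

def card (σ : Block) : ℕ := σ.hi + 1 - σ.lo

def Mem {b : ℕ} (σ : Block) (y : ℕ → Fin b) : Prop :=
  σ.lo ≤ prefixVal b y σ.depth ∧ prefixVal b y σ.depth ≤ σ.hi

def root (b : ℕ) : Block := ⟨1, 0, b - 1⟩

-- The disjunct `a ≤ r` only makes the search unconditionally terminating.
def refineDepth (a b : ℕ) (σ : Block) : ℕ :=
  Nat.find (p := fun r => 1 ≤ r ∧ (a ≤ σ.card * b ^ r ∨ a ≤ r))
    ⟨max 1 a, le_max_left _ _, Or.inr (le_max_right _ _)⟩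

def child (a b : ℕ) (σ : Block) (x : ℕ) : Block :=
  ⟨σ.depth + refineDepth a b σ,
    σ.lo * b ^ refineDepth a b σ + cut a b (σ.card * b ^ (refineDepth a b σ - 1)) x,
    σ.lo * b ^ refineDepth a b σ + cut a b (σ.card * b ^ (refineDepth a b σ - 1)) (x + 1) - 1⟩

variable {a b : ℕ} {σ : Block}

theorem valid_root (hb : 0 < b) : (root b).Valid b where
  lo_le_hi := Nat.zero_le _
  hi_lt := by simp [root]; omega
  lo_div_eq := by simp [root, Nat.div_eq_of_lt (Nat.sub_lt hb one_pos)]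

theorem mem_root (y : ℕ → Fin b) : (root b).Mem y := by
  simp only [Mem, root, prefixVal]
  omega

namespace Valid

theorem one_le_card (hσ : σ.Valid b) : 1 ≤ σ.card := by
  have := hσ.lo_le_hi
  unfold card; omega

theorem card_le (hb : 0 < b) (hσ : σ.Valid b) : σ.card ≤ b := by
  have h1 := Nat.lt_div_mul_add (a := σ.hi) hb
  have h2 := Nat.div_mul_le_self σ.lo b
  rw [← hσ.lo_div_eq] at h1
  unfold card; omega

theorem prefixVal_div_eq {y : ℕ → Fin b} (hσ : σ.Valid b) (hy : σ.Mem y) :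
    prefixVal b y σ.depth / b = σ.lo / b :=
  le_antisymm (hσ.lo_div_eq ▸ Nat.div_le_div_right hy.2) (Nat.div_le_div_right hy.1)

variable [NeZero b]

theorem digitSeq_lo_eq {y : ℕ → Fin b} (hσ : σ.Valid b) (hy : σ.Mem y) {i : ℕ}
    (hi : i + 1 < σ.depth) : digitSeq b σ.depth σ.lo i = y i := by
  have hd : σ.depth - 1 - i = σ.depth - 2 - i + 1 := by omega
  have key : σ.lo / b ^ (σ.depth - 1 - i) = prefixVal b y σ.depth / b ^ (σ.depth - 1 - i) := by
    rw [hd, pow_succ', ← Nat.div_div_eq_div_mul, ← Nat.div_div_eq_div_mul,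
      hσ.prefixVal_div_eq hy]
  rw [← digitSeq_prefixVal y (by omega : i < σ.depth), digitSeq, digitSeq, key]

theorem mem_digitSeq_lo (hσ : σ.Valid b) : σ.Mem (digitSeq b σ.depth σ.lo) := by
  rw [Mem, prefixVal_digitSeq (hσ.lo_le_hi.trans_lt hσ.hi_lt) le_rfl, Nat.sub_self,
    pow_zero, Nat.div_one]
  exact ⟨le_rfl, hσ.lo_le_hi⟩

end Valid

theorem mem_of_eqOn {y y' : ℕ → Fin b} (hy : σ.Mem y) (h : ∀ i < σ.depth, y i = y' i) :
    σ.Mem y' := by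
  rwa [Mem, ← prefixVal_congr h]

theorem refineDepth_spec (hb : 2 ≤ b) (hab : b ≤ a) (hσ : σ.Valid b) :
    1 ≤ refineDepth a b σ ∧ σ.card * b ^ (refineDepth a b σ - 1) ≤ a ∧
      a ≤ σ.card * b ^ refineDepth a b σ := by
  have hex : ∃ r, 1 ≤ r ∧ (a ≤ σ.card * b ^ r ∨ a ≤ r) :=
    ⟨max 1 a, le_max_left _ _, Or.inr (le_max_right _ _)⟩
  have large : ∀ r, a ≤ r → a ≤ σ.card * b ^ r := fun r hr =>
    calc a ≤ r := hr
      _ ≤ 2 ^ r := Nat.lt_two_pow_self.le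
      _ ≤ b ^ r := Nat.pow_le_pow_left hb r
      _ ≤ σ.card * b ^ r := Nat.le_mul_of_pos_left _ hσ.one_le_card
  obtain ⟨hr, hspec⟩ : 1 ≤ refineDepth a b σ ∧ _ := Nat.find_spec hex
  refine ⟨hr, ?_, hspec.elim id (large _)⟩
  rcases hr.eq_or_lt with h | h
  · rw [← h, Nat.sub_self, pow_zero, mul_one]
    exact (hσ.card_le (by omega)).trans hab
  · have hfind : refineDepth a b σ = Nat.find hex := rfl
    have hmin := Nat.find_min hex (show refineDepth a b σ - 1 < Nat.find hex by omega)
    push Not at hmin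
    exact (hmin (by omega)).1.le

theorem exists_child_eq (hb : 2 ≤ b) (hab : b ≤ a) (hσ : σ.Valid b) :
    ∃ r G, 1 ≤ r ∧ G ≤ a ∧ a ≤ G * b ∧ σ.lo * b ^ r + G * b = (σ.hi + 1) * b ^ r ∧
      ∀ x, (child a b σ x).depth = σ.depth + r ∧
        (child a b σ x).lo = σ.lo * b ^ r + cut a b G x ∧
        (child a b σ x).hi + 1 = σ.lo * b ^ r + cut a b G (x + 1) := by
  obtain ⟨hr, hGa, haG⟩ := refineDepth_spec hb hab hσ
  set r := refineDepth a b σ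
  have hGb : σ.card * b ^ (r - 1) * b = σ.card * b ^ r := by
    rw [mul_assoc, ← pow_succ, Nat.sub_add_cancel hr]
  refine ⟨r, σ.card * b ^ (r - 1), hr, hGa, by rwa [hGb], ?_, fun x => ⟨rfl, rfl, ?_⟩⟩
  · rw [hGb, ← add_mul, card, Nat.add_sub_cancel' (by have := hσ.lo_le_hi; omega)]
  · have := cut_strictMono (a := a) (b := b) (G := σ.card * b ^ (r - 1)) (by omega)
      (show 0 < x + 1 by omega)
    rw [cut_zero] at this
    show σ.lo * b ^ r + cut a b (σ.card * b ^ (r - 1)) (x + 1) - 1 + 1 = _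
    omega

theorem valid_child (hb : 2 ≤ b) (hab : b ≤ a) (hσ : σ.Valid b) {x : ℕ} (hx : x < a) :
    (child a b σ x).Valid b := by
  obtain ⟨r, G, hr, hGa, haG, hsum, hchild⟩ := exists_child_eq hb hab hσ
  obtain ⟨hd, hlo, hhi⟩ := hchild x
  have hlt := cut_strictMono (a := a) (b := b) (G := G) (by omega) (show x < x + 1 by omega)
  have hcut : cut a b G (x + 1) ≤ G * b :=
    cut_self hGa haG ▸ (cut_strictMono (by omega)).monotone hx
  have hpow : (σ.hi + 1) * b ^ r ≤ b ^ (σ.depth + r) :=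
    pow_add b σ.depth r ▸ Nat.mul_le_mul_right _ hσ.hi_lt
  constructor
  · omega
  · rw [hd]; omega
  · have hhi' : (child a b σ x).hi = b * (σ.lo * b ^ (r - 1)) + (cut a b G (x + 1) - 1) := by
      rw [mul_left_comm, ← pow_succ', Nat.sub_add_cancel hr]; omega
    rw [hhi', hlo, mul_comm σ.lo, ← Nat.sub_add_cancel hr, pow_succ', mul_assoc,
      Nat.add_sub_cancel, mul_comm (b ^ (r - 1)), Nat.mul_add_div (by omega),
      Nat.mul_add_div (by omega), cut_div_eq (by omega)]

theorem mem_of_mem_child (hb : 2 ≤ b) (hab : b ≤ a) (hσ : σ.Valid b) {x : ℕ} (hx : x < a)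
    {y : ℕ → Fin b} (hy : (child a b σ x).Mem y) : σ.Mem y := by
  obtain ⟨r, G, -, hGa, haG, hsum, hchild⟩ := exists_child_eq hb hab hσ
  obtain ⟨hd, hlo, hhi⟩ := hchild x
  have hcut : cut a b G (x + 1) ≤ G * b :=
    cut_self hGa haG ▸ (cut_strictMono (by omega)).monotone hx
  have hpos : 0 < b ^ r := by positivity
  obtain ⟨hy₁, hy₂⟩ := hy
  rw [hd] at hy₁ hy₂
  rw [Mem, ← prefixVal_add_div_pow y σ.depth r]
  constructor
  · exact (Nat.le_div_iff_mul_le hpos).2 (by omega)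
  · exact Nat.lt_add_one_iff.1 ((Nat.div_lt_iff_lt_mul hpos).2 (by omega))

theorem exists_mem_child (hb : 2 ≤ b) (hab : b ≤ a) (hσ : σ.Valid b) {y : ℕ → Fin b}
    (hy : σ.Mem y) : ∃ x < a, (child a b σ x).Mem y := by
  obtain ⟨r, G, -, hGa, haG, hsum, hchild⟩ := exists_child_eq hb hab hσ
  have hpos : 0 < b ^ r := by positivity
  obtain ⟨hy₁, hy₂⟩ := hy
  rw [← prefixVal_add_div_pow y σ.depth r] at hy₁ hy₂
  rw [Nat.le_div_iff_mul_le hpos] at hy₁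
  rw [← Nat.lt_add_one_iff, Nat.div_lt_iff_lt_mul hpos] at hy₂
  obtain ⟨x, hx, hx₁, hx₂⟩ := exists_le_and_lt_succ (f := cut a b G)
    (p := prefixVal b y (σ.depth + r) - σ.lo * b ^ r) (n := a) (by simp)
    (by rw [cut_self hGa haG]; omega)
  obtain ⟨hd, hlo, hhi⟩ := hchild x
  refine ⟨x, hx, ?_, ?_⟩ <;> rw [hd] <;> omega

theorem eq_of_mem_child_of_mem_child (hb : 2 ≤ b) (hab : b ≤ a) (hσ : σ.Valid b)
    {x x' : ℕ} {y : ℕ → Fin b} (h : (child a b σ x).Mem y) (h' : (child a b σ x').Mem y) :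
    x = x' := by
  obtain ⟨r, G, -, -, -, -, hchild⟩ := exists_child_eq hb hab hσ
  obtain ⟨hd, hlo, hhi⟩ := hchild x
  obtain ⟨hd', hlo', hhi'⟩ := hchild x'
  have hmono := (cut_strictMono (a := a) (b := b) (G := G) (by omega)).monotone
  obtain ⟨h₁, h₂⟩ := h
  obtain ⟨h₁', h₂'⟩ := h'
  rw [hd] at h₁ h₂
  rw [hd'] at h₁' h₂'
  by_contra hne
  rcases Nat.lt_or_gt_of_ne hne with hlt | hlt
  · have := hmono (show x + 1 ≤ x' by omega); omega
  · have := hmono (show x' + 1 ≤ x by omega); omega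

end Block

open Block

def blockOf (a b : ℕ) (w : List (Fin a)) : Block :=
  w.foldl (fun σ (x : Fin a) => child a b σ x) (root b)

def colour (a b : ℕ) [NeZero b] (w : List (Fin a)) : Fin b :=
  digitSeq b (blockOf a b w).depth (blockOf a b w).lo (w.length - 1)

def blockAlong (a b : ℕ) (u : ℕ → Fin a) (k : ℕ) : Block :=
  blockOf a b (List.ofFn fun i : Fin k => u i)

variable {a b : ℕ}

theorem blockAlong_succ (u : ℕ → Fin a) (k : ℕ) :
    blockAlong a b u (k + 1) = child a b (blockAlong a b u k) (u k) :=
  foldl_ofFn_succ (fun σ (x : Fin a) => child a b σ x) (root b) u k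

theorem blockAlong_congr {u u' : ℕ → Fin a} {k : ℕ} (h : ∀ i < k, u i = u' i) :
    blockAlong a b u k = blockAlong a b u' k := by
  unfold blockAlong
  congr 2
  exact funext fun i => h i i.isLt

theorem valid_blockAlong (hb : 2 ≤ b) (hab : b ≤ a) (u : ℕ → Fin a) (k : ℕ) :
    (blockAlong a b u k).Valid b := by
  induction k with
  | zero => exact valid_root (by omega)
  | succ k ih => rw [blockAlong_succ]; exact valid_child hb hab ih (u k).isLt

theorem lt_depth_blockAlong (hb : 2 ≤ b) (hab : b ≤ a) (u : ℕ → Fin a) (k : ℕ) :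
    k < (blockAlong a b u k).depth := by
  induction k with
  | zero => exact Nat.one_pos
  | succ k ih =>
    obtain ⟨r, _, hr, -, -, -, hchild⟩ := exists_child_eq hb hab (valid_blockAlong hb hab u k)
    rw [blockAlong_succ, (hchild _).1]
    omega

theorem mem_blockAlong_of_le (hb : 2 ≤ b) (hab : b ≤ a) {u : ℕ → Fin a} {y : ℕ → Fin b}
    {k j : ℕ} (hkj : k ≤ j) (hy : (blockAlong a b u j).Mem y) : (blockAlong a b u k).Mem y := by
  induction j, hkj using Nat.le_induction with
  | base => exact hy
  | succ j _ ih =>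
    rw [blockAlong_succ] at hy
    exact ih (mem_of_mem_child hb hab (valid_blockAlong hb hab u j) (u j).isLt hy)

theorem exists_forall_mem_blockAlong (hb : 2 ≤ b) (hab : b ≤ a) (y : ℕ → Fin b) :
    ∃ u : ℕ → Fin a, ∀ k, (blockAlong a b u k).Mem y := by
  obtain ⟨u, hu⟩ := exists_forall_foldl_ofFn (fun σ (x : Fin a) => child a b σ x)
    (P := fun σ => σ.Valid b ∧ σ.Mem y) ⟨valid_root (by omega), mem_root y⟩
    fun σ ⟨hσ, hy⟩ => by
      obtain ⟨x, hx, hxy⟩ := exists_mem_child hb hab hσ hy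
      exact ⟨⟨x, hx⟩, valid_child hb hab hσ hx, hxy⟩
  exact ⟨u, fun k => (hu k).2⟩

variable [NeZero b]

theorem ctil_colour_apply (u : ℕ → Fin a) (k : ℕ) :
    ctil (colour a b) u k =
      digitSeq b (blockAlong a b u (k + 1)).depth (blockAlong a b u (k + 1)).lo k := by
  simp [ctil, colour, blockAlong]

theorem ctil_colour_eq_of_forall_mem (hb : 2 ≤ b) (hab : b ≤ a) {u : ℕ → Fin a}
    {y : ℕ → Fin b} (hy : ∀ k, (blockAlong a b u k).Mem y) : ctil (colour a b) u = y := by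
  funext k
  rw [ctil_colour_apply]
  exact (valid_blockAlong hb hab u (k + 1)).digitSeq_lo_eq (hy (k + 1))
    (lt_depth_blockAlong hb hab u (k + 1))

theorem mem_blockAlong_ctil_colour (hb : 2 ≤ b) (hab : b ≤ a) (u : ℕ → Fin a) (k : ℕ) :
    (blockAlong a b u k).Mem (ctil (colour a b) u) := by
  -- Below `j`, `ctil` agrees with the lowest word of the block at step `j`, which lies in all
  -- earlier blocks.
  set j := k + (blockAlong a b u k).depth
  have hv := valid_blockAlong hb hab u j
  have hmem : ∀ i ≤ j, (blockAlong a b u i).Mem (digitSeq b (blockAlong a b u j).depth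
      (blockAlong a b u j).lo) := fun i hi => mem_blockAlong_of_le hb hab hi hv.mem_digitSeq_lo
  refine mem_of_eqOn (hmem k (by omega)) fun i hi => ?_
  rw [ctil_colour_apply]
  exact ((valid_blockAlong hb hab u (i + 1)).digitSeq_lo_eq (hmem (i + 1) (by omega))
    (lt_depth_blockAlong hb hab u (i + 1))).symm

theorem bijective_ctil_colour (hb : 2 ≤ b) (hab : b ≤ a) :
    Function.Bijective (ctil (colour a b : List (Fin a) → Fin b)) := by
  refine ⟨fun u u' huu' => funext fun k => ?_, fun y => ?_⟩
  · induction k using Nat.strong_induction_on with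
    | _ k ih =>
      have hk := blockAlong_congr (b := b) ih
      have h := mem_blockAlong_ctil_colour hb hab u (k + 1)
      have h' := mem_blockAlong_ctil_colour hb hab u' (k + 1)
      rw [blockAlong_succ, hk] at h
      rw [blockAlong_succ, ← huu'] at h'
      exact Fin.ext (eq_of_mem_child_of_mem_child hb hab (valid_blockAlong hb hab u' k) h h')
  · obtain ⟨u, hu⟩ := exists_forall_mem_blockAlong hb hab y
    exact ⟨u, ctil_colour_eq_of_forall_mem hb hab hu⟩

end CantorColouring

theorem stmt14_general (n m : ℕ) (hm : 1 ≤ m) :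
    (∃ c : List (Fin (n + 1)) → Fin (m + 1), Function.Bijective (ctil c)) ↔ m ≤ n := by
  constructor
  · rintro ⟨c, hc⟩
    simpa using card_le_of_surjective_ctil hc.2
  · intro hmn
    exact ⟨_, CantorColouring.bijective_ctil_colour (by omega) (by omega : m + 1 ≤ n + 1)⟩

/-- For integers `n, m ≥ 1`, with `X = {0,…,n}` and `Y = {0,…,m}`, there exists a
colouring `c : X⁺ → Y` of the `(n+1)`-ary Cantor tree whose induced map
`c̃ : X^ω → Y^ω` is a bijection if and only if `n ≥ m`. -/
theorem stmt14 (n m : ℕ) (hn : 1 ≤ n) (hm : 1 ≤ m) :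
    (∃ c : List (Fin (n + 1)) → Fin (m + 1), Function.Bijective (ctil c)) ↔ m ≤ n :=
  stmt14_general n m hm
end

section
/- Pigeonhole lemma: let X, Y be finite alphabets with |X| > |Y| and let f : X^ω → Y^ω preserve the beginning of words. Then for every k ≥ 0 there exist a finite word w ∈ X* and infinite words u, u' ∈ X^ω such that u and u' differ in their first letter, while f(wu) and f(wu') agree on their first |w| + k letters. -/
/-!
Choose `n` with `|Y|^(n+k) < |X|^n`. By pigeonhole, two distinct words `v ≠ v'` of length `n`,
padded by a fixed letter, have images under `f` agreeing on their first `n + k` letters. Splitting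
`v` and `v'` at their first difference as `w a t` and `w a' t'` gives the required `w` and
`u = a t …`, `u' = a' t' …`, since `|w| + k < n + k`.
-/

/-- The infinite word obtained by prepending the finite word `w` to `u`. -/
def prepend {X : Type*} (w : List X) (u : ℕ → X) : ℕ → X :=
  fun i => if h : i < w.length then w.get ⟨i, h⟩ else u (i - w.length)

theorem Nat.exists_pow_add_lt_pow {a b : ℕ} (hba : b < a) (k : ℕ) :
    ∃ n, b ^ (n + k) < a ^ n := by
  have ha : (0 : ℝ) < a := by exact_mod_cast (Nat.zero_le b).trans_lt hba
  have hratio : (b : ℝ) / a < 1 := (div_lt_one ha).2 (by exact_mod_cast hba)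
  have hlim :
      Filter.Tendsto (fun n => (b : ℝ) ^ k * ((b : ℝ) / a) ^ n) Filter.atTop (nhds 0) := by
    simpa using (tendsto_pow_atTop_nhds_zero_of_lt_one (by positivity) hratio).const_mul
      ((b : ℝ) ^ k)
  obtain ⟨n, hn⟩ := (hlim.eventually (gt_mem_nhds one_pos)).exists
  refine ⟨n, ?_⟩
  have : (b : ℝ) ^ (n + k) < a ^ n :=
    calc (b : ℝ) ^ (n + k) = (b : ℝ) ^ k * ((b : ℝ) / a) ^ n * a ^ n := by
          rw [div_pow, pow_add]; field_simp
      _ < 1 * a ^ n := by gcongr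
      _ = a ^ n := one_mul _
  exact_mod_cast this

theorem List.exists_eq_append_cons_of_ne {X : Type*} :
    ∀ {l l' : List X}, l ≠ l' → l.length = l'.length →
      ∃ w a a' t t', a ≠ a' ∧ l = w ++ a :: t ∧ l' = w ++ a' :: t'
  | [], [], hne, _ => absurd rfl hne
  | a :: t, a' :: t', hne, hlen => by
    by_cases ha : a = a'
    · subst ha
      obtain ⟨w, b, b', s, s', hb, rfl, rfl⟩ :=
        exists_eq_append_cons_of_ne (fun h => hne (congrArg _ h)) (by simpa using hlen)
      exact ⟨a :: w, b, b', s, s', hb, rfl, rfl⟩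
    · exact ⟨[], a, a', t, t', ha, rfl, rfl⟩

section Prepend

variable {X : Type*}

theorem prepend_append (w₁ w₂ : List X) (u : ℕ → X) :
    prepend (w₁ ++ w₂) u = prepend w₁ (prepend w₂ u) := by
  funext i
  simp only [prepend, List.length_append, List.get_eq_getElem]
  by_cases h₁ : i < w₁.length
  · simp [h₁, List.getElem_append_left, show i < w₁.length + w₂.length by omega]
  · by_cases h₂ : i - w₁.length < w₂.length
    · simp [h₁, h₂, show i < w₁.length + w₂.length by omega,
        List.getElem_append_right (Nat.not_lt.1 h₁)]
    · simp [h₁, h₂, show ¬ i < w₁.length + w₂.length by omega, Nat.sub_add_eq]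

@[simp]
theorem prepend_cons_zero (a : X) (t : List X) (u : ℕ → X) : prepend (a :: t) u 0 = a := by
  simp [prepend]

end Prepend

theorem exists_ne_prepend_agree_of_card_pow_lt {X Y : Type*} [Fintype X] [Fintype Y]
    (f : (ℕ → X) → ℕ → Y) (c : ℕ → X) {n k : ℕ}
    (hn : Fintype.card Y ^ (n + k) < Fintype.card X ^ n) :
    ∃ l l' : List X, l ≠ l' ∧ l.length = n ∧ l'.length = n ∧
      ∀ i < n + k, f (prepend l c) i = f (prepend l' c) i := by
  let F : (Fin n → X) → Fin (n + k) → Y := fun v i => f (prepend (List.ofFn v) c) i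
  obtain ⟨v, v', hne, heq⟩ := Fintype.exists_ne_map_eq_of_card_lt F (by simpa using hn)
  exact ⟨_, _, List.ofFn_injective.ne hne, List.length_ofFn, List.length_ofFn,
    fun i hi => congrFun heq ⟨i, hi⟩⟩

theorem stmt15_general {X Y : Type*} [Fintype X] [Fintype Y]
    (hcard : Fintype.card Y < Fintype.card X)
    (f : (ℕ → X) → ℕ → Y)
    (k : ℕ) :
    ∃ (w : List X) (u u' : ℕ → X), u 0 ≠ u' 0 ∧
      ∀ i < w.length + k, f (prepend w u) i = f (prepend w u') i := by
  obtain ⟨c⟩ : Nonempty X := Fintype.card_pos_iff.mp ((Nat.zero_le _).trans_lt hcard)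
  obtain ⟨n, hn⟩ := Nat.exists_pow_add_lt_pow hcard k
  obtain ⟨l, l', hne, hl, hl', hagree⟩ :=
    exists_ne_prepend_agree_of_card_pow_lt f (fun _ => c) hn
  obtain ⟨w, a, a', t, t', ha, rfl, rfl⟩ :=
    List.exists_eq_append_cons_of_ne hne (hl.trans hl'.symm)
  refine ⟨w, prepend (a :: t) fun _ => c, prepend (a' :: t') fun _ => c, by simpa using ha, ?_⟩
  intro i hi
  simp only [← prepend_append]
  exact hagree i (by simp only [List.length_append, List.length_cons] at hl; omega)

/-- Pigeonhole lemma: if `|X| > |Y|` and `f : X^ω → Y^ω` preserves the beginning of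
words, then for every `k` there are a finite word `w` and infinite words `u, u'`
differing in their first letter such that `f(wu)` and `f(wu')` agree on their first
`|w| + k` letters. -/
theorem stmt15 {X Y : Type*} [Fintype X] [Fintype Y]
    (hcard : Fintype.card Y < Fintype.card X)
    (f : (ℕ → X) → ℕ → Y)
    (hf : ∀ (u v : ℕ → X) (j : ℕ), (∀ i < j, u i = v i) → ∀ i < j, f u i = f v i)
    (k : ℕ) :
    ∃ (w : List X) (u u' : ℕ → X), u 0 ≠ u' 0 ∧
      ∀ i < w.length + k, f (prepend w u) i = f (prepend w u') i :=
  stmt15_general hcard f k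
end
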